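/- Let f : ℂ² → ℂ³ be the map (x,y) ↦ (x², y², x³ + y³ + xy) and φ : ℂ[X₁,X₂,Y] → ℂ[x,y] the induced algebra map X₁ ↦ x², X₂ ↦ y², Y ↦ x³ + y³ + xy. Then ℂ[x,y] is generated as a ℂ[X₁,X₂]-module by 1, x, y, xy, and the 4×4 matrix Λ_f with rows (Y, −X₁, −X₂, −1), (−X₂Y − X₁², Y + X₁X₂, X₂² − X₁, 0), (−X₂² − X₁Y, −X₂ + X₁², Y + X₁X₂, 0), (−X₁X₂, −X₂², −X₁², Y) satisfies: for each row, the φ-image of the entries paired with the generators (1, x, y, xy) sums to zero in ℂ[x,y]. -/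
import Mathlib


open MvPolynomial

/-- `φ : ℂ[X₁,X₂,Y] → ℂ[x,y]`, `X₁ ↦ x²`, `X₂ ↦ y²`, `Y ↦ x³ + y³ + xy`
(source variables `0 ↦ X₁`, `1 ↦ X₂`, `2 ↦ Y`; target `0 ↦ x`, `1 ↦ y`). -/
noncomputable def phiF : MvPolynomial (Fin 3) ℂ →ₐ[ℂ] MvPolynomial (Fin 2) ℂ :=
  MvPolynomial.aeval ![X 0 ^ 2, X 1 ^ 2, X 0 ^ 3 + X 1 ^ 3 + X 0 * X 1]

/-- The generators `1, x, y, xy` of `ℂ[x,y]` over `ℂ[X₁,X₂]`. -/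
noncomputable def genF : Fin 4 → MvPolynomial (Fin 2) ℂ :=
  ![1, X 0, X 1, X 0 * X 1]

/-- The presentation matrix `Λ_f` for `f(x,y) = (x², y², x³+y³+xy)`. -/
noncomputable def LambdaF : Matrix (Fin 4) (Fin 4) (MvPolynomial (Fin 3) ℂ) :=
  !![X 2, -(X 0), -(X 1), -1;
     -(X 1 * X 2) - X 0 ^ 2, X 2 + X 0 * X 1, X 1 ^ 2 - X 0, 0;
     -(X 1 ^ 2) - X 0 * X 2, -(X 1) + X 0 ^ 2, X 2 + X 0 * X 1, 0;
     -(X 0 * X 1), -(X 1 ^ 2), -(X 0 ^ 2), X 2]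

lemma gen_all (b : MvPolynomial (Fin 2) ℂ) : ∃ a : Fin 4 → MvPolynomial (Fin 2) ℂ,
    b = ∑ j : Fin 4, MvPolynomial.aeval ![(X 0 : MvPolynomial (Fin 2) ℂ) ^ 2, X 1 ^ 2] (a j) * genF j := by
  induction b using MvPolynomial.induction_on with
  | C c =>
    refine ⟨![C c, 0, 0, 0], ?_⟩
    simp [Fin.sum_univ_four, genF]
  | add p q hp hq =>
    obtain ⟨a, ha⟩ := hp
    obtain ⟨a', ha'⟩ := hq
    refine ⟨a + a', ?_⟩
    simp only [Pi.add_apply, map_add, add_mul, Finset.sum_add_distrib, ← ha, ← ha']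
  | mul_X p i hp =>
    obtain ⟨a, ha⟩ := hp
    fin_cases i
    · refine ⟨![X 0 * a 1, a 0, X 0 * a 3, a 2], ?_⟩
      subst ha
      simp only [Fin.sum_univ_four, genF, map_mul, Matrix.cons_val_zero,
        Matrix.cons_val_one, Matrix.head_cons, Matrix.cons_val_two, Matrix.cons_val_three,
        Matrix.tail_cons, Fin.mk_zero, Fin.mk_one, aeval_X] at *
      ring
    · refine ⟨![X 1 * a 2, X 1 * a 3, a 0, a 1], ?_⟩
      subst ha
      simp only [Fin.sum_univ_four, genF, map_mul, Matrix.cons_val_zero,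
        Matrix.cons_val_one, Matrix.head_cons, Matrix.cons_val_two, Matrix.cons_val_three,
        Matrix.tail_cons, Fin.mk_zero, Fin.mk_one, aeval_X] at *
      ring

/-- `ℂ[x,y]` is generated by `1, x, y, xy` as a `ℂ[X₁,X₂]`-module (via `X₁ ↦ x²`,
`X₂ ↦ y²`), and each row of `Λ_f` is a relation among these generators. -/
theorem LambdaF_relations :
    (∀ b : MvPolynomial (Fin 2) ℂ, ∃ a : Fin 4 → MvPolynomial (Fin 2) ℂ,
      b = ∑ j : Fin 4, MvPolynomial.aeval ![(X 0 : MvPolynomial (Fin 2) ℂ) ^ 2, X 1 ^ 2] (a j) * genF j) ∧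
    ∀ i : Fin 4, ∑ j : Fin 4, phiF (LambdaF i j) * genF j = 0 := by
  refine ⟨gen_all, ?_⟩
  intro i
  fin_cases i <;>
  · simp [Fin.sum_univ_four, phiF, LambdaF, genF, Matrix.cons_val_two, Matrix.cons_val_three]
    ring
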